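/- arXiv:2602.01428 — 2 statements merged into one kernel-verified Lean document; each statement's English description precedes it below -/
import Mathlib

section
/- The iterated SynthID distributions form a martingale: let P be a distribution on a finite set W, let g_1, g_2, … be i.i.d. random vectors with coordinates i.i.d. Bernoulli(1/2), and define P̂_0 = P, P̂_t = T_{g_t}(P̂_{t−1}) where (T_g(R))(w) = R(w)·(1 + g_w − Σ_{w': g_{w'}=1} R(w')). Then for each w ∈ W, the sequence (P̂_t(w))_{t≥0} is a bounded martingale with respect to the filtration generated by (g_1,…,g_t); in particular E[P̂_t(w)] = P(w) for all t. -/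
open MeasureTheory ProbabilityTheory
open scoped BigOperators

/-- The SynthID tournament operator: `(T_g(R))(w) = R(w) · (1 + g_w − Σ_{w' : g_{w'}=1} R(w'))`. -/
noncomputable def Tg {W : Type*} [Fintype W] (g : W → Bool) (R : W → ℝ) : W → ℝ :=
  fun w => R w * (1 + (if g w then (1 : ℝ) else 0) - ∑ w', if g w' then R w' else 0)

/-- Iterated SynthID distributions: `P̂_0 = P`, `P̂_{t+1} = T_{g_t}(P̂_t)`. -/
noncomputable def Phat {W : Type*} [Fintype W] {Ω : Type*}
    (g : ℕ → Ω → (W → Bool)) (P : W → ℝ) : ℕ → Ω → W → ℝ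
  | 0 => fun _ => P
  | (t + 1) => fun ω => Tg (g t ω) (Phat g P t ω)

/-- The natural filtration generated by the process `g`: at time `t`, the σ-algebra
generated by `g 0, …, g (t-1)`. -/
def natFilt {Ω : Type*} [m : MeasurableSpace Ω] {β : Type*} [MeasurableSpace β]
    (g : ℕ → Ω → β) (hg : ∀ i, Measurable (g i)) : Filtration ℕ m where
  seq t := ⨆ i ∈ Set.Iio t, MeasurableSpace.comap (g i) inferInstance
  mono' := fun _ _ hst => biSup_mono fun _ hk => lt_of_lt_of_le hk hst
  le' := fun _ => iSup₂_le fun i _ => (hg i).comap_le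

set_option linter.unusedSectionVars false

section AuxCount
variable {W : Type*} [Fintype W] [DecidableEq W]

lemma synthid_sum_coord (w : W) :
    ∑ b : W → Bool, (if b w then (1:ℝ) else 0) = (Fintype.card (W → Bool) : ℝ) / 2 := by
  have hinv : Function.Involutive (fun b : W → Bool => Function.update b w (!b w)) := by
    intro b
    simp [Function.update_idem, Bool.not_not, Function.update_self, Function.update_eq_self]
  have h2 : ∑ b : W → Bool, (if b w then (1:ℝ) else 0)
      = ∑ b : W → Bool, (if b w then (0:ℝ) else 1) := by
    rw [← Equiv.sum_comp (hinv.toPerm _) (fun b : W → Bool => if b w then (0:ℝ) else 1)]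
    refine Finset.sum_congr rfl fun b _ => ?_
    simp only [Function.Involutive.coe_toPerm, Function.update_self]
    cases h : b w <;> simp [h]
  have h3 : ∑ b : W → Bool, ((if b w then (1:ℝ) else 0) + (if b w then (0:ℝ) else 1))
      = (Fintype.card (W → Bool) : ℝ) := by
    have hone : ∀ b : W → Bool,
        ((if b w then (1:ℝ) else 0) + (if b w then (0:ℝ) else 1)) = 1 := by
      intro b; cases h : b w <;> simp [h]
    rw [Finset.sum_congr rfl fun b _ => hone b, Finset.sum_const, Finset.card_univ,
      nsmul_eq_mul, mul_one]
  rw [Finset.sum_add_distrib, ← h2] at h3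
  linarith

lemma synthid_integral_coord_uniform (w : W) :
    ∫ b, (if b w then (1:ℝ) else 0) ∂((PMF.uniformOfFintype (W → Bool)).toMeasure) = 1/2 := by
  rw [PMF.integral_eq_sum]
  have hcard : (0:ℝ) < (Fintype.card (W → Bool) : ℝ) := by exact_mod_cast Fintype.card_pos
  have hval : ∀ b : W → Bool, ((PMF.uniformOfFintype (W → Bool)) b).toReal
      = ((Fintype.card (W → Bool) : ℝ))⁻¹ := by
    intro b; rw [PMF.uniformOfFintype_apply]; simp
  simp only [hval, smul_eq_mul]
  rw [← Finset.mul_sum, synthid_sum_coord]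
  field_simp

lemma synthid_Tg_nonneg {g : W → Bool} {R : W → ℝ} (hR0 : ∀ w, 0 ≤ R w) (hR1 : ∑ w, R w = 1)
    (w : W) : 0 ≤ Tg g R w := by
  have hS1 : (∑ w', if g w' then R w' else 0) ≤ 1 := by
    rw [← hR1]
    exact Finset.sum_le_sum fun w' _ => by split <;> simp [hR0 w']
  unfold Tg
  apply mul_nonneg (hR0 w)
  split <;> linarith

lemma synthid_Tg_sum {g : W → Bool} {R : W → ℝ} (hR1 : ∑ w, R w = 1) :
    ∑ w, Tg g R w = 1 := by
  unfold Tg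
  set S := ∑ w', if g w' then R w' else 0 with hS
  have h1 : ∑ w, R w * (1 + (if g w then (1:ℝ) else 0) - S)
      = ∑ w, (R w + ((if g w then R w else 0) - R w * S)) := by
    refine Finset.sum_congr rfl fun w _ => ?_
    split <;> ring
  rw [h1, Finset.sum_add_distrib, Finset.sum_sub_distrib, hR1, ← hS, ← Finset.sum_mul, hR1,
    one_mul]
  ring

end AuxCount

section AuxPhat
variable {W : Type*} [Fintype W] [DecidableEq W] {Ω : Type*}

lemma synthid_Phat_succ (g : ℕ → Ω → (W → Bool)) (P : W → ℝ) (t : ℕ) (ω : Ω) :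
    Phat g P (t + 1) ω = Tg (g t ω) (Phat g P t ω) := rfl

lemma synthid_Phat_basics (g : ℕ → Ω → (W → Bool)) (P : W → ℝ)
    (hP0 : ∀ w, 0 ≤ P w) (hP1 : ∑ w, P w = 1) :
    ∀ t ω, (∀ w, 0 ≤ Phat g P t ω w) ∧ (∑ w, Phat g P t ω w = 1) := by
  intro t
  induction t with
  | zero => exact fun ω => ⟨hP0, hP1⟩
  | succ t ih =>
    intro ω
    obtain ⟨h0, h1⟩ := ih ω
    rw [synthid_Phat_succ]
    exact ⟨fun w => synthid_Tg_nonneg h0 h1 w, synthid_Tg_sum h1⟩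

lemma synthid_Phat_mem (g : ℕ → Ω → (W → Bool)) (P : W → ℝ)
    (hP0 : ∀ w, 0 ≤ P w) (hP1 : ∑ w, P w = 1) (t : ℕ) (ω : Ω) (w : W) :
    Phat g P t ω w ∈ Set.Icc (0:ℝ) 1 := by
  obtain ⟨h0, h1⟩ := synthid_Phat_basics g P hP0 hP1 t ω
  refine ⟨h0 w, ?_⟩
  calc Phat g P t ω w ≤ ∑ w', Phat g P t ω w' :=
        Finset.single_le_sum (fun i _ => h0 i) (Finset.mem_univ w)
    _ = 1 := h1

/-- Representation of one step as an affine function of the coordinates of `g t`. -/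
lemma synthid_Phat_succ_rep (g : ℕ → Ω → (W → Bool)) (P : W → ℝ) (t : ℕ) (ω : Ω) (w : W) :
    Phat g P (t + 1) ω w
      = Phat g P t ω w + (Phat g P t ω w * (if g t ω w then (1:ℝ) else 0)
        - ∑ w', (Phat g P t ω w * Phat g P t ω w') * (if g t ω w' then (1:ℝ) else 0)) := by
  rw [synthid_Phat_succ]
  unfold Tg
  have h1 : ∑ w', (if g t ω w' then Phat g P t ω w' else 0)
      = ∑ w', Phat g P t ω w' * (if g t ω w' then (1:ℝ) else 0) := by
    refine Finset.sum_congr rfl fun w' _ => ?_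
    split <;> ring
  rw [h1]
  have h2 : ∑ w', Phat g P t ω w * Phat g P t ω w' * (if g t ω w' then (1:ℝ) else 0)
      = Phat g P t ω w * ∑ w', Phat g P t ω w' * (if g t ω w' then (1:ℝ) else 0) := by
    rw [Finset.mul_sum]; exact Finset.sum_congr rfl fun w' _ => by ring
  rw [h2]
  ring

end AuxPhat

section AuxMeas
variable {W : Type*} [Fintype W] [DecidableEq W] {Ω : Type*} [MeasurableSpace Ω]

lemma synthid_meas_comap (g : ℕ → Ω → (W → Bool)) (t : ℕ) :
    Measurable[MeasurableSpace.comap (g t) inferInstance] (g t) :=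
  fun s hs => ⟨s, hs, rfl⟩

lemma synthid_X_meas_comap (g : ℕ → Ω → (W → Bool)) (t : ℕ) (w' : W) :
    Measurable[MeasurableSpace.comap (g t) inferInstance]
      (fun ω => if g t ω w' then (1:ℝ) else 0) := by
  have hφ : Measurable (fun b : W → Bool => if b w' then (1:ℝ) else 0) :=
    (measurable_from_top (f := fun x : Bool => if x then (1:ℝ) else 0)).comp
      (measurable_pi_apply w')
  exact hφ.comp (synthid_meas_comap g t)

lemma synthid_comap_le_natFilt (g : ℕ → Ω → (W → Bool)) (hg : ∀ i, Measurable (g i)) (t : ℕ) :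
    MeasurableSpace.comap (g t) inferInstance ≤ natFilt g hg (t + 1) := by
  exact le_biSup (f := fun i : ℕ => MeasurableSpace.comap (g i)
    (inferInstance : MeasurableSpace (W → Bool))) (by simp : t ∈ Set.Iio (t + 1))

lemma synthid_Phat_adapted (g : ℕ → Ω → (W → Bool)) (hg : ∀ i, Measurable (g i)) (P : W → ℝ) :
    ∀ t w, StronglyMeasurable[natFilt g hg t] (fun ω => Phat g P t ω w) := by
  intro t
  induction t with
  | zero => exact fun w => stronglyMeasurable_const
  | succ t ih =>
    intro w
    have hR : ∀ w', StronglyMeasurable[natFilt g hg (t+1)] (fun ω => Phat g P t ω w') :=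
      fun w' => (ih w').mono ((natFilt g hg).mono (Nat.le_succ t))
    have hX : ∀ w', StronglyMeasurable[natFilt g hg (t+1)]
        (fun ω => if g t ω w' then (1:ℝ) else 0) := fun w' =>
      ((synthid_X_meas_comap g t w').mono (synthid_comap_le_natFilt g hg t)
        le_rfl).stronglyMeasurable
    have hrep : (fun ω => Phat g P (t+1) ω w)
        = fun ω => Phat g P t ω w + (Phat g P t ω w * (if g t ω w then (1:ℝ) else 0)
          - ∑ w', (Phat g P t ω w * Phat g P t ω w') * (if g t ω w' then (1:ℝ) else 0)) :=
      funext fun ω => synthid_Phat_succ_rep g P t ω w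
    rw [hrep]
    exact (hR w).add (((hR w).mul (hX w)).sub
      (Finset.stronglyMeasurable_fun_sum _ fun w' _ => ((hR w).mul (hR w')).mul (hX w')))

lemma synthid_indep (μ : Measure Ω) (g : ℕ → Ω → (W → Bool)) (hg : ∀ i, Measurable (g i))
    (hind : iIndepFun g μ) (t : ℕ) :
    Indep (MeasurableSpace.comap (g t) inferInstance) (natFilt g hg t) μ := by
  have hiI : iIndep (fun i => MeasurableSpace.comap (g i) inferInstance) μ := hind
  have h := indep_biSup_compl (fun i => (hg i).comap_le) hiI (Set.Iio t)
  have hle : MeasurableSpace.comap (g t) inferInstance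
      ≤ ⨆ i ∈ (Set.Iio t)ᶜ, MeasurableSpace.comap (g i) inferInstance :=
    le_biSup (f := fun i : ℕ => MeasurableSpace.comap (g i)
      (inferInstance : MeasurableSpace (W → Bool))) (by simp : t ∈ (Set.Iio t)ᶜ)
  exact indep_of_indep_of_le_left h.symm hle

end AuxMeas
section AuxStep
variable {W : Type*} [Fintype W] [DecidableEq W] {Ω : Type*} [MeasurableSpace Ω]
  (μ : Measure Ω) [IsProbabilityMeasure μ]

lemma synthid_integrable_of_bdd {f : Ω → ℝ} (hf : AEStronglyMeasurable f μ)
    (h : ∀ ω, |f ω| ≤ 1) : Integrable f μ :=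
  (integrable_const 1).mono' hf (ae_of_all _ fun ω => by
    rw [Real.norm_eq_abs]; exact h ω)

lemma synthid_integral_X (g : ℕ → Ω → (W → Bool)) (hg : ∀ t, Measurable (g t))
    (hlaw : ∀ t, Measure.map (g t) μ = (PMF.uniformOfFintype (W → Bool)).toMeasure)
    (t : ℕ) (w' : W) :
    ∫ ω, (if g t ω w' then (1:ℝ) else 0) ∂μ = 1/2 := by
  have hφ : Measurable (fun b : W → Bool => if b w' then (1:ℝ) else 0) :=
    (measurable_from_top (f := fun x : Bool => if x then (1:ℝ) else 0)).comp
      (measurable_pi_apply w')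
  have h := integral_map (μ := μ) (hg t).aemeasurable
    (f := fun b : W → Bool => if b w' then (1:ℝ) else 0)
    (hφ.stronglyMeasurable.aestronglyMeasurable)
  rw [hlaw t, synthid_integral_coord_uniform] at h
  exact h.symm

lemma synthid_condexp_step (P : W → ℝ) (hP0 : ∀ w, 0 ≤ P w) (hP1 : ∑ w, P w = 1)
    (g : ℕ → Ω → (W → Bool)) (hg : ∀ t, Measurable (g t))
    (hlaw : ∀ t, Measure.map (g t) μ = (PMF.uniformOfFintype (W → Bool)).toMeasure)
    (hind : iIndepFun g μ) (t : ℕ) (w : W) :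
    (fun ω => Phat g P t ω w) =ᵐ[μ] μ[fun ω => Phat g P (t+1) ω w | natFilt g hg t] := by
  have hm : natFilt g hg t ≤ ‹MeasurableSpace Ω› := (natFilt g hg).le t
  haveI : SigmaFinite (μ.trim hm) := inferInstance
  set f : Ω → ℝ := fun ω => Phat g P t ω w with hf_def
  set X : W → Ω → ℝ := fun w' ω => if g t ω w' then (1:ℝ) else 0 with hX_def
  set B : W → Ω → ℝ := fun w' => (fun ω => f ω * Phat g P t ω w') * X w' with hB_def
  -- basic bounds
  have hmem : ∀ t' ω w', Phat g P t' ω w' ∈ Set.Icc (0:ℝ) 1 :=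
    fun t' ω w' => synthid_Phat_mem g P hP0 hP1 t' ω w'
  have habsP : ∀ ω w', |Phat g P t ω w'| ≤ 1 := fun ω w' =>
    abs_le.2 ⟨by linarith [(hmem t ω w').1], (hmem t ω w').2⟩
  have habsX : ∀ w' ω, |X w' ω| ≤ 1 := fun w' ω => by
    simp only [hX_def]; split <;> simp
  -- strong measurability
  have hfm : StronglyMeasurable[natFilt g hg t] f := synthid_Phat_adapted g hg P t w
  have hRm : ∀ w', StronglyMeasurable[natFilt g hg t] (fun ω => Phat g P t ω w') :=
    fun w' => synthid_Phat_adapted g hg P t w'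
  have hXm : ∀ w', Measurable (X w') := fun w' =>
    (synthid_X_meas_comap g t w').mono (hg t).comap_le le_rfl
  -- integrability
  have int_f : Integrable f μ :=
    synthid_integrable_of_bdd μ ((hfm.mono hm).aestronglyMeasurable) (fun ω => habsP ω w)
  have int_X : ∀ w', Integrable (X w') μ := fun w' =>
    synthid_integrable_of_bdd μ (hXm w').aestronglyMeasurable (habsX w')
  have int_fX : Integrable (f * X w) μ := by
    refine synthid_integrable_of_bdd μ ?_ ?_
    · exact ((hfm.mono hm).mul (hXm w).stronglyMeasurable).aestronglyMeasurable
    · intro ω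
      rw [Pi.mul_apply, abs_mul]
      exact mul_le_one₀ (habsP ω w) (abs_nonneg _) (habsX w ω)
  have int_B : ∀ w', Integrable (B w') μ := by
    intro w'
    refine synthid_integrable_of_bdd μ ?_ ?_
    · exact (((hfm.mono hm).mul ((hRm w').mono hm)).mul
        (hXm w').stronglyMeasurable).aestronglyMeasurable
    · intro ω
      simp only [hB_def, Pi.mul_apply, abs_mul]
      have h1 : |f ω| * |Phat g P t ω w'| ≤ 1 :=
        mul_le_one₀ (habsP ω w) (abs_nonneg _) (habsP ω w')
      exact mul_le_one₀ h1 (abs_nonneg _) (habsX w' ω)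
  have int_Bsum : Integrable (∑ w', B w') μ := integrable_finset_sum' _ fun w' _ => int_B w'
  -- conditional expectation of the coordinates
  have hXcond : ∀ w', μ[X w' | natFilt g hg t] =ᵐ[μ] fun _ => (1:ℝ)/2 := by
    intro w'
    have hXsm : StronglyMeasurable[MeasurableSpace.comap (g t) inferInstance] (X w') :=
      (synthid_X_meas_comap g t w').stronglyMeasurable
    have h := condExp_indep_eq (hg t).comap_le hm hXsm (synthid_indep μ g hg hind t)
    have he : (fun _ : Ω => μ[X w']) = fun _ : Ω => (1:ℝ)/2 := by
      funext _; exact synthid_integral_X μ g hg hlaw t w'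
    rw [he] at h
    exact h
  -- pull-out
  have hA2 : μ[f * X w | natFilt g hg t] =ᵐ[μ] fun ω => f ω * (1/2) := by
    have h := condExp_mul_of_stronglyMeasurable_left hfm int_fX (int_X w)
    exact h.trans ((Filter.EventuallyEq.refl _ f).mul (hXcond w))
  have hBall : ∀ᵐ ω ∂μ, ∀ w', (μ[B w' | natFilt g hg t]) ω
      = (f ω * Phat g P t ω w') * (1/2) := by
    rw [ae_all_iff]
    intro w'
    have hsm : StronglyMeasurable[natFilt g hg t] (fun ω => f ω * Phat g P t ω w') :=
      hfm.mul (hRm w')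
    have h := condExp_mul_of_stronglyMeasurable_left hsm (int_B w') (int_X w')
    exact h.trans ((Filter.EventuallyEq.refl _ _).mul (hXcond w'))
  -- assemble
  have hrep : (fun ω => Phat g P (t+1) ω w) = f + (f * X w - ∑ w', B w') := by
    funext ω
    simp only [Pi.add_apply, Pi.sub_apply, Pi.mul_apply, Finset.sum_apply, hB_def]
    exact synthid_Phat_succ_rep g P t ω w
  rw [hrep]
  have h_add := condExp_add (μ := μ) (m := natFilt g hg t) int_f (int_fX.sub int_Bsum)
  have h_sub := condExp_sub (μ := μ) (m := natFilt g hg t) int_fX int_Bsum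
  have h_f := condExp_of_stronglyMeasurable hm hfm int_f
  have h_sum := condExp_finsetSum (μ := μ) (m := natFilt g hg t)
    (fun w' (_ : w' ∈ Finset.univ) => int_B w')
  refine Filter.EventuallyEq.symm ?_
  filter_upwards [h_add, h_sub, h_sum, hA2, hBall] with ω e1 e2 e4 e5 e6
  have hsum1 : ∑ w', Phat g P t ω w' = 1 := (synthid_Phat_basics g P hP0 hP1 t ω).2
  have eBs : (μ[∑ w', B w' | natFilt g hg t]) ω = f ω * (1/2) := by
    rw [e4, Finset.sum_apply]
    have h6 : ∑ w', (μ[B w' | natFilt g hg t]) ω = ∑ w', (f ω * Phat g P t ω w') * (1/2) :=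
      Finset.sum_congr rfl fun w' _ => e6 w'
    rw [h6, ← Finset.sum_mul, ← Finset.mul_sum, hsum1, mul_one]
  rw [e1, Pi.add_apply, h_f, e2, Pi.sub_apply, e5, eBs]
  ring

end AuxStep

/-- The iterated SynthID distributions form a bounded martingale with respect to the
natural filtration of the i.i.d. uniform (coordinatewise Bernoulli(1/2)) vectors `g_t`,
and in particular `E[P̂_t(w)] = P(w)` for all `t`. -/
theorem stmt17 {W : Type*} [Fintype W] [DecidableEq W]
    {Ω : Type*} [MeasurableSpace Ω] (μ : Measure Ω) [IsProbabilityMeasure μ]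
    (P : W → ℝ) (hP0 : ∀ w, 0 ≤ P w) (hP1 : ∑ w, P w = 1)
    (g : ℕ → Ω → (W → Bool)) (hg : ∀ t, Measurable (g t))
    (hlaw : ∀ t, Measure.map (g t) μ = (PMF.uniformOfFintype (W → Bool)).toMeasure)
    (hind : iIndepFun g μ) :
    (∀ w, Martingale (fun t ω => Phat g P t ω w) (natFilt g hg) μ) ∧
      (∀ t ω w, Phat g P t ω w ∈ Set.Icc (0 : ℝ) 1) ∧
      (∀ t w, ∫ ω, Phat g P t ω w ∂μ = P w) := by
  have hmem : ∀ t ω w, Phat g P t ω w ∈ Set.Icc (0:ℝ) 1 :=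
    fun t ω w => synthid_Phat_mem g P hP0 hP1 t ω w
  have hadapted : ∀ w, StronglyAdapted (natFilt g hg) (fun t ω => Phat g P t ω w) :=
    fun w t => synthid_Phat_adapted g hg P t w
  have hint : ∀ t w, Integrable (fun ω => Phat g P t ω w) μ := fun t w =>
    synthid_integrable_of_bdd μ
      (((synthid_Phat_adapted g hg P t w).mono ((natFilt g hg).le t)).aestronglyMeasurable)
      (fun ω => abs_le.2 ⟨by linarith [(hmem t ω w).1], (hmem t ω w).2⟩)
  have hstep := fun t w => synthid_condexp_step μ P hP0 hP1 g hg hlaw hind t w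
  refine ⟨fun w => martingale_nat (hadapted w) (fun t => hint t w) (fun t => hstep t w),
    hmem, ?_⟩
  intro t
  induction t with
  | zero =>
    intro w
    have : (fun ω : Ω => Phat g P 0 ω w) = fun _ : Ω => P w := rfl
    rw [this, integral_const, probReal_univ, one_smul]
  | succ t ih =>
    intro w
    have hm : natFilt g hg t ≤ ‹MeasurableSpace Ω› := (natFilt g hg).le t
    haveI : SigmaFinite (μ.trim hm) := inferInstance
    calc ∫ ω, Phat g P (t+1) ω w ∂μ
        = ∫ ω, (μ[fun ω => Phat g P (t+1) ω w | natFilt g hg t]) ω ∂μ :=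
          (integral_condExp hm).symm
      _ = ∫ ω, Phat g P t ω w ∂μ := integral_congr_ae (hstep t w).symm
      _ = P w := ih w
end

section
/- Almost-sure convergence of SynthID to a degenerate distribution: with P̂_t defined by iterating the tournament operator T_{g_t} with i.i.d. Bernoulli(1/2) vectors g_t, the sequence P̂_t converges almost surely to a random distribution P̂ that is almost surely a point mass, and E[P̂] = P; equivalently, Ent(P̂_t) → 0 almost surely. -/
open MeasureTheory ProbabilityTheory Filter
open scoped BigOperators

/-- Shannon entropy of a distribution on a finite set. -/
noncomputable def Ent {W : Type*} [Fintype W] (P : W → ℝ) : ℝ :=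
  -∑ w, P w * Real.log (P w)

open scoped NNReal ENNReal Topology

lemma phat_inv {W : Type*} [Fintype W] {Ω : Type*} (g : ℕ → Ω → (W → Bool)) (P : W → ℝ)
    (hP0 : ∀ w, 0 ≤ P w) (hP1 : ∑ w, P w = 1) (t : ℕ) (ω : Ω) :
    (∀ w, 0 ≤ Phat g P t ω w) ∧ (∑ w, Phat g P t ω w = 1) := by
  induction t with
  | zero => exact ⟨hP0, hP1⟩
  | succ t ih =>
    obtain ⟨h0, h1⟩ := ih
    set R := Phat g P t ω with hR
    have hS1 : (∑ w', if g t ω w' then R w' else 0) ≤ 1 := by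
      rw [← h1]
      exact Finset.sum_le_sum fun w' _ => by split <;> simp [h0 w']
    have hunf : ∀ w, Phat g P (t + 1) ω w
        = R w * (1 + (if g t ω w then (1:ℝ) else 0) - ∑ w', if g t ω w' then R w' else 0) := by
      intro w; rfl
    constructor
    · intro w
      rw [hunf]
      refine mul_nonneg (h0 w) ?_
      have : (0:ℝ) ≤ if g t ω w then (1:ℝ) else 0 := by split <;> norm_num
      linarith
    · simp only [hunf, mul_sub, mul_add, mul_one, Finset.sum_sub_distrib, Finset.sum_add_distrib,
        ← Finset.sum_mul, h1, one_mul, mul_ite, mul_one, mul_zero]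
      ring

lemma phat_le_one {W : Type*} [Fintype W] {Ω : Type*} (g : ℕ → Ω → (W → Bool)) (P : W → ℝ)
    (hP0 : ∀ w, 0 ≤ P w) (hP1 : ∑ w, P w = 1) (t : ℕ) (ω : Ω) (w : W) :
    Phat g P t ω w ≤ 1 := by
  obtain ⟨h0, h1⟩ := phat_inv g P hP0 hP1 t ω
  calc Phat g P t ω w ≤ ∑ w', Phat g P t ω w' :=
        Finset.single_le_sum (fun i _ => h0 i) (Finset.mem_univ w)
    _ = 1 := h1

lemma phat_meas {W : Type*} [Fintype W] {Ω : Type*} [m0 : MeasurableSpace Ω]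
    (g : ℕ → Ω → (W → Bool)) (P : W → ℝ) :
    ∀ t w, Measurable[⨆ i ∈ Set.Iio t, MeasurableSpace.comap (g i) inferInstance]
      (fun ω => Phat g P t ω w) := by
  intro t
  induction t with
  | zero => intro w; exact measurable_const
  | succ t ih =>
    intro w
    have hle : (⨆ i ∈ Set.Iio t, MeasurableSpace.comap (g i) inferInstance)
        ≤ ⨆ i ∈ Set.Iio (t+1), MeasurableSpace.comap (g i) inferInstance :=
      biSup_mono fun i hi => lt_trans hi (Nat.lt_succ_self t)
    have hcle : MeasurableSpace.comap (g t) inferInstance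
        ≤ ⨆ i ∈ Set.Iio (t+1), MeasurableSpace.comap (g i) inferInstance :=
      le_iSup₂ (f := fun i (_ : i ∈ Set.Iio (t+1)) => MeasurableSpace.comap (g i) inferInstance)
        t (Nat.lt_succ_self t)
    have hgt : Measurable[⨆ i ∈ Set.Iio (t+1), MeasurableSpace.comap (g i) inferInstance]
        (g t) := (comap_measurable (g t)).mono hcle le_rfl
    have hA : ∀ w', Measurable[⨆ i ∈ Set.Iio (t+1), MeasurableSpace.comap (g i) inferInstance]
        (fun ω => (if g t ω w' then (1:ℝ) else 0)) := fun w' =>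
      (measurable_of_countable (fun h : W → Bool => if h w' then (1:ℝ) else 0)).comp hgt
    have hx : (fun ω => Phat g P (t+1) ω w) = fun ω =>
        Phat g P t ω w * (1 + (if g t ω w then (1:ℝ) else 0)
          - ∑ w', (if g t ω w' then (1:ℝ) else 0) * Phat g P t ω w') := by
      funext ω
      show Tg (g t ω) (Phat g P t ω) w = _
      unfold Tg
      congr 2
      exact Finset.sum_congr rfl fun w' _ => by split <;> simp
    rw [hx]
    exact ((ih w).mono hle le_rfl).mul
      ((measurable_const.add (hA w)).sub
        (Finset.measurable_sum _ fun w' _ => (hA w').mul ((ih w').mono hle le_rfl)))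

/-- Natural filtration of the sequence `g`. -/
def natF {W : Type*} [Fintype W] {Ω : Type*} [m0 : MeasurableSpace Ω]
    (g : ℕ → Ω → (W → Bool)) (hg : ∀ t, Measurable (g t)) : Filtration ℕ m0 where
  seq n := ⨆ i ∈ Set.Iio n, MeasurableSpace.comap (g i) inferInstance
  mono' a b hab := biSup_mono fun i hi => lt_of_lt_of_le hi hab
  le' n := iSup₂_le fun i _ => (hg i).comap_le

lemma chi_exp {W : Type*} [Fintype W] [DecidableEq W] [Nonempty W] {Ω : Type*} [MeasurableSpace Ω]
    (μ : Measure Ω) [IsProbabilityMeasure μ] (gt : Ω → (W → Bool)) (hgt : Measurable gt)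
    (hlawt : Measure.map gt μ = (PMF.uniformOfFintype (W → Bool)).toMeasure) (w' : W) :
    ∫ ω, (if gt ω w' then (1:ℝ) else 0) ∂μ = 1/2 := by
  have hmeas : Measurable (fun h : W → Bool => if h w' then (1:ℝ) else 0) :=
    measurable_of_countable _
  have h1 : ∫ ω, (if gt ω w' then (1:ℝ) else 0) ∂μ
      = ∫ h, (if h w' then (1:ℝ) else 0) ∂(Measure.map gt μ) := by
    rw [integral_map hgt.aemeasurable hmeas.aestronglyMeasurable]
  rw [h1, hlawt, PMF.integral_eq_sum]
  have hcard : (0:ℝ) < (Fintype.card (W → Bool) : ℝ) := by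
    exact_mod_cast Fintype.card_pos
  have hsum : ∑ h : W → Bool, (if h w' then (1:ℝ) else 0)
      = (Fintype.card (W → Bool) : ℝ) / 2 := by
    set flipe : (W → Bool) → (W → Bool) := fun h => Function.update h w' (!h w') with hflipe
    have hinv : ∀ h, flipe (flipe h) = h := by
      intro h
      funext x
      by_cases hx : x = w'
      · subst hx; simp [hflipe, Function.update]
      · simp [hflipe, Function.update, hx]
    have h2 : ∑ h : W → Bool, (if h w' then (1:ℝ) else 0)
        = ∑ h : W → Bool, (if flipe h w' then (1:ℝ) else 0) :=
      (Function.Bijective.sum_comp (Function.bijective_iff_has_inverse.mpr ⟨flipe, hinv, hinv⟩)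
        (fun h => if h w' then (1:ℝ) else 0)).symm
    have h3 : ∀ h : W → Bool, (if flipe h w' then (1:ℝ) else 0)
        = 1 - (if h w' then (1:ℝ) else 0) := by
      intro h
      have : flipe h w' = !h w' := by simp [hflipe, Function.update]
      rw [this]
      rcases Bool.dichotomy (h w') with hb | hb <;> simp [hb]
    have h4 : ∑ h : W → Bool, (if h w' then (1:ℝ) else 0)
        = ∑ h : W → Bool, (1 - (if h w' then (1:ℝ) else 0)) := by
      rw [h2]; exact Finset.sum_congr rfl fun h _ => h3 h
    have h5 : ∑ h : W → Bool, (1 - (if h w' then (1:ℝ) else 0))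
        = (Fintype.card (W → Bool) : ℝ) - ∑ h : W → Bool, (if h w' then (1:ℝ) else 0) := by
      rw [Finset.sum_sub_distrib]
      simp [Finset.card_univ]
    rw [h5] at h4
    linarith
  calc ∑ h : W → Bool, ((PMF.uniformOfFintype (W → Bool)) h).toReal • (if h w' then (1:ℝ) else 0)
      = ∑ h : W → Bool, ((Fintype.card (W → Bool) : ℝ))⁻¹ * (if h w' then (1:ℝ) else 0) := by
        refine Finset.sum_congr rfl fun h _ => ?_
        simp [PMF.uniformOfFintype_apply]
    _ = ((Fintype.card (W → Bool) : ℝ))⁻¹ * ∑ h : W → Bool, (if h w' then (1:ℝ) else 0) := by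
        rw [Finset.mul_sum]
    _ = 1/2 := by
        rw [hsum]
        field_simp

lemma phat_martingale {W : Type*} [Fintype W] [DecidableEq W] [Nonempty W] {Ω : Type*}
    [MeasurableSpace Ω] (μ : Measure Ω) [IsProbabilityMeasure μ]
    (P : W → ℝ) (hP0 : ∀ w, 0 ≤ P w) (hP1 : ∑ w, P w = 1)
    (g : ℕ → Ω → (W → Bool)) (hg : ∀ t, Measurable (g t))
    (hlaw : ∀ t, Measure.map (g t) μ = (PMF.uniformOfFintype (W → Bool)).toMeasure)
    (hind : iIndepFun g μ) (w : W) :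
    Martingale (fun t ω => Phat g P t ω w) (natF g hg) μ := by
  have habs : ∀ t ω w', |Phat g P t ω w'| ≤ 1 := fun t ω w' =>
    abs_le.mpr ⟨by linarith [(phat_inv g P hP0 hP1 t ω).1 w'], phat_le_one g P hP0 hP1 t ω w'⟩
  have hintb : ∀ (f : Ω → ℝ), Measurable f → (∀ ω, |f ω| ≤ 1) → Integrable f μ := fun f hf hbd =>
    ⟨hf.aestronglyMeasurable, HasFiniteIntegral.of_bounded (C := 1)
      (Eventually.of_forall fun ω => by simpa [Real.norm_eq_abs] using hbd ω)⟩
  have hmeas : ∀ t w', Measurable (fun ω => Phat g P t ω w') := fun t w' =>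
    (phat_meas g P t w').mono ((natF g hg).le t) le_rfl
  have hchi_m : ∀ t w', Measurable (fun ω => (if g t ω w' then (1:ℝ) else 0)) := fun t w' =>
    (measurable_of_countable (fun h : W → Bool => if h w' then (1:ℝ) else 0)).comp (hg t)
  have hchi_abs : ∀ t w' ω, |(if g t ω w' then (1:ℝ) else 0)| ≤ 1 := by
    intro t w' ω; split <;> norm_num
  have hchi_int : ∀ t w', Integrable (fun ω => (if g t ω w' then (1:ℝ) else 0)) μ := fun t w' =>
    hintb _ (hchi_m t w') (hchi_abs t w')
  have hcond : ∀ t, (fun ω => Phat g P t ω w)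
      =ᵐ[μ] μ[fun ω => Phat g P (t+1) ω w|(natF g hg) t] := by
    intro t
    have hSM : ∀ w', StronglyMeasurable[(natF g hg) t] (fun ω => Phat g P t ω w') := fun w' =>
      (phat_meas g P t w').stronglyMeasurable
    -- conditional expectation of chi
    have hchi_ce : ∀ w', (μ[(fun ω => (if g t ω w' then (1:ℝ) else 0))|(natF g hg) t])
        =ᵐ[μ] fun _ => (1:ℝ)/2 := by
      intro w'
      have hSMchi : StronglyMeasurable[MeasurableSpace.comap (g t) inferInstance]
          (fun ω => (if g t ω w' then (1:ℝ) else 0)) :=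
        ((measurable_of_countable (fun h : W → Bool => if h w' then (1:ℝ) else 0)).comp
          (comap_measurable (g t))).stronglyMeasurable
      have hdisj : Disjoint ({t} : Set ℕ) (Set.Iio t) := by simp
      have hindep0 := indep_iSup_of_disjoint (fun k => (hg k).comap_le) hind hdisj
      rw [iSup_singleton] at hindep0
      have hindep : Indep (MeasurableSpace.comap (g t) inferInstance) ((natF g hg) t) μ :=
        hindep0
      have h := condExp_indep_eq ((hg t).comap_le) ((natF g hg).le t) hSMchi hindep
      refine h.trans ?_
      rw [chi_exp μ (g t) (hg t) (hlaw t) w']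
    -- pull-out property
    have hprod : ∀ (X : Ω → ℝ), StronglyMeasurable[(natF g hg) t] X → (∀ ω, |X ω| ≤ 1) → ∀ w',
        (μ[X * (fun ω => (if g t ω w' then (1:ℝ) else 0))|(natF g hg) t]) =ᵐ[μ]
          (fun ω => X ω * (1/2)) := by
      intro X hX hXb w'
      have hXm : Measurable X := hX.measurable.mono ((natF g hg).le t) le_rfl
      have h1 := condExp_mul_of_stronglyMeasurable_left (m := (natF g hg) t) (μ := μ) hX
        (hintb _ (hXm.mul (hchi_m t w')) (fun ω => by
          have := hXb ω; have := hchi_abs t w' ω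
          calc |X ω * (if g t ω w' then (1:ℝ) else 0)| = |X ω| * |(if g t ω w' then (1:ℝ) else 0)| :=
            abs_mul _ _
          _ ≤ 1 := mul_le_one₀ (by assumption) (abs_nonneg _) (by assumption)))
        (hchi_int t w')
      refine h1.trans ?_
      filter_upwards [hchi_ce w'] with ω hω
      show X ω * _ = X ω * (1/2)
      rw [hω]
    -- expansion
    set B : Ω → ℝ := fun ω => Phat g P t ω w with hB
    set χ : W → Ω → ℝ := fun w' ω => (if g t ω w' then (1:ℝ) else 0) with hχ
    set Y : W → Ω → ℝ := fun w' ω => Phat g P t ω w * Phat g P t ω w' with hY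
    have hexp : (fun ω => Phat g P (t+1) ω w) = B + (B * χ w - ∑ w' : W, Y w' * χ w') := by
      funext ω
      show Tg (g t ω) (Phat g P t ω) w = _
      unfold Tg
      have hsum : ∀ w', Y w' ω * χ w' ω
          = Phat g P t ω w * (if g t ω w' then Phat g P t ω w' else 0) := by
        intro w'; simp only [hY, hχ]; split <;> ring
      simp only [Pi.add_apply, Pi.sub_apply, Pi.mul_apply, Finset.sum_apply, hsum, hB, hχ,
        ← Finset.mul_sum]
      rw [Finset.sum_congr rfl fun x _ => hsum x, ← Finset.mul_sum]
      ring
    have hBint : Integrable B μ := hintb _ (hmeas t w) (fun ω => habs t ω w)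
    have hYabs : ∀ w' ω, |Y w' ω| ≤ 1 := fun w' ω => by
      rw [hY, abs_mul]
      exact mul_le_one₀ (habs t ω w) (abs_nonneg _) (habs t ω w')
    have hMint : Integrable (B * χ w) μ := hintb _ ((hmeas t w).mul (hchi_m t w)) (fun ω => by
      rw [Pi.mul_apply, abs_mul]
      exact mul_le_one₀ (habs t ω w) (abs_nonneg _) (hchi_abs t w ω))
    have hYint : ∀ w', Integrable (Y w' * χ w') μ := fun w' =>
      hintb _ (((hmeas t w).mul (hmeas t w')).mul (hchi_m t w')) (fun ω => by
        rw [Pi.mul_apply, abs_mul]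
        exact mul_le_one₀ (hYabs w' ω) (abs_nonneg _) (hchi_abs t w' ω))
    have hSint : Integrable (∑ w' : W, Y w' * χ w') μ :=
      integrable_finset_sum' _ fun w' _ => hYint w'
    have h_add : μ[fun ω => Phat g P (t+1) ω w|(natF g hg) t]
        =ᵐ[μ] μ[B|(natF g hg) t] + (μ[B * χ w|(natF g hg) t] - μ[∑ w' : W, Y w' * χ w'|(natF g hg) t]) := by
      rw [hexp]
      refine (condExp_add hBint (hMint.sub hSint) _).trans ?_
      exact EventuallyEq.add EventuallyEq.rfl (condExp_sub hMint hSint _)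
    have h_B : μ[B|(natF g hg) t] = B :=
      condExp_of_stronglyMeasurable ((natF g hg).le t) (hSM w) hBint
    have h_M : μ[B * χ w|(natF g hg) t] =ᵐ[μ] fun ω => B ω * (1/2) :=
      hprod B (hSM w) (fun ω => habs t ω w) w
    have h_Ssum : μ[∑ w' : W, Y w' * χ w'|(natF g hg) t]
        =ᵐ[μ] ∑ w' : W, μ[Y w' * χ w'|(natF g hg) t] :=
      condExp_finsetSum (fun w' _ => hYint w') _
    have h_Y : ∀ w', μ[Y w' * χ w'|(natF g hg) t] =ᵐ[μ] fun ω => Y w' ω * (1/2) := fun w' =>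
      hprod (Y w') ((hSM w).mul (hSM w')) (hYabs w') w'
    symm
    refine h_add.trans ?_
    filter_upwards [h_M, h_Ssum, ae_all_iff.mpr h_Y] with ω hM hS hY'
    simp only [Pi.add_apply, Pi.sub_apply]
    rw [h_B, hM, hS, Finset.sum_apply]
    have : ∑ w' : W, (μ[Y w' * χ w'|(natF g hg) t]) ω = ∑ w' : W, Y w' ω * (1/2) :=
      Finset.sum_congr rfl fun w' _ => hY' w'
    rw [this]
    have hsumY : ∑ w' : W, Y w' ω * (1/2) = B ω * (1/2) := by
      simp only [hY, hB]
      rw [← Finset.sum_mul, ← Finset.mul_sum, (phat_inv g P hP0 hP1 t ω).2]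
      ring
    rw [hsumY]
    ring
  exact martingale_nat (fun t => (phat_meas g P t w).stronglyMeasurable)
    (fun t => hintb _ (hmeas t w) (fun ω => habs t ω w)) hcond

/-- Almost-sure convergence of SynthID to a degenerate distribution: the iterates `P̂_t`
converge a.s. to a random distribution `P̂` that is a.s. a point mass, with `E[P̂] = P`;
equivalently, `Ent(P̂_t) → 0` almost surely. -/
theorem stmt18 {W : Type*} [Fintype W] [DecidableEq W]
    {Ω : Type*} [MeasurableSpace Ω] (μ : Measure Ω) [IsProbabilityMeasure μ]
    (P : W → ℝ) (hP0 : ∀ w, 0 ≤ P w) (hP1 : ∑ w, P w = 1)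
    (g : ℕ → Ω → (W → Bool)) (hg : ∀ t, Measurable (g t))
    (hlaw : ∀ t, Measure.map (g t) μ = (PMF.uniformOfFintype (W → Bool)).toMeasure)
    (hind : iIndepFun g μ) :
    ∃ Plim : Ω → W → ℝ,
      (∀ᵐ ω ∂μ, ∀ w, Tendsto (fun t => Phat g P t ω w) atTop (nhds (Plim ω w))) ∧
      (∀ᵐ ω ∂μ, ∃ w0, ∀ w, Plim ω w = if w = w0 then 1 else 0) ∧
      (∀ w, ∫ ω, Plim ω w ∂μ = P w) ∧
      (∀ᵐ ω ∂μ, Tendsto (fun t => Ent (Phat g P t ω)) atTop (nhds 0)) := by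
  classical
  have hW : Nonempty W := by
    by_contra h
    rw [not_nonempty_iff] at h
    rw [Finset.univ_eq_empty, Finset.sum_empty] at hP1
    exact one_ne_zero hP1.symm
  have habs : ∀ t ω w', |Phat g P t ω w'| ≤ 1 := fun t ω w' =>
    abs_le.mpr ⟨by linarith [(phat_inv g P hP0 hP1 t ω).1 w'], phat_le_one g P hP0 hP1 t ω w'⟩
  have hmeas : ∀ t w', Measurable (fun ω => Phat g P t ω w') := fun t w' =>
    (phat_meas g P t w').mono ((natF g hg).le t) le_rfl
  have hmart := fun w => phat_martingale μ P hP0 hP1 g hg hlaw hind w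
  have hbdd : ∀ w t, eLpNorm (fun ω => Phat g P t ω w) 1 μ ≤ ((1 : ℝ≥0) : ℝ≥0∞) := by
    intro w t
    have h := eLpNorm_le_of_ae_bound (μ := μ) (p := 1) (f := fun ω => Phat g P t ω w) (C := 1)
      (Eventually.of_forall fun ω => by simpa [Real.norm_eq_abs] using habs t ω w)
    simpa [measure_univ] using h
  have hconv0 : ∀ᵐ ω ∂μ, ∀ w, ∃ c, Tendsto (fun t => Phat g P t ω w) atTop (𝓝 c) :=
    ae_all_iff.mpr fun w => ((hmart w).submartingale).exists_ae_tendsto_of_bdd (hbdd w)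
  set Plim : Ω → W → ℝ := fun ω w => limUnder atTop (fun t => Phat g P t ω w) with hPlimdef
  have hconv : ∀ᵐ ω ∂μ, ∀ w, Tendsto (fun t => Phat g P t ω w) atTop (𝓝 (Plim ω w)) := by
    filter_upwards [hconv0] with ω hω w
    obtain ⟨c, hc⟩ := hω w
    have : Plim ω w = c := hc.limUnder_eq
    rw [this]
    exact hc
  -- Borel-Cantelli II: each pure singleton pattern occurs infinitely often
  have hio : ∀ᵐ ω ∂μ, ∀ w0 : W, ∃ᶠ t in atTop, g t ω = (fun w => decide (w = w0)) := by
    rw [ae_all_iff]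
    intro w0
    set f0 : W → Bool := fun w => decide (w = w0) with hf0
    set s : ℕ → Set Ω := fun t => g t ⁻¹' {f0} with hs
    have hsm : ∀ t, MeasurableSet (s t) := fun t => (hg t) (measurableSet_singleton f0)
    have hiis : iIndepSet s μ := by
      rw [iIndepSet_iff_meas_biInter hsm]
      intro S
      have := hind.measure_inter_preimage_eq_mul S
        (sets := fun _ => ({f0} : Set (W → Bool)))
        (fun i _ => measurableSet_singleton f0)
      exact this
    have hμs : ∀ t, μ (s t) = ((Fintype.card (W → Bool) : ℝ≥0∞))⁻¹ := by
      intro t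
      rw [hs]
      simp only
      rw [← Measure.map_apply (hg t) (measurableSet_singleton f0), hlaw t,
        PMF.toMeasure_apply_singleton _ _ (measurableSet_singleton f0),
        PMF.uniformOfFintype_apply]
    have htsum : ∑' t, μ (s t) = ∞ := by
      simp only [hμs]
      refine ENNReal.tsum_const_eq_top_of_ne_zero ?_
      simp [ENNReal.inv_ne_zero]
    have hone := measure_limsup_eq_one hsm hiis htsum
    have hae : ∀ᵐ ω ∂μ, ω ∈ limsup s atTop := by
      rw [ae_mem_iff_measure_eq]
      · rw [hone, measure_univ]
      · exact (MeasurableSet.measurableSet_limsup hsm).nullMeasurableSet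
    filter_upwards [hae] with ω hω
    rw [mem_limsup_iff_frequently_mem] at hω
    exact hω.mono fun t ht => by simpa [hs] using ht
  -- integral preserved
  have hint : ∀ t w, Integrable (fun ω => Phat g P t ω w) μ := fun t w =>
    ⟨(hmeas t w).aestronglyMeasurable, HasFiniteIntegral.of_bounded (C := 1)
      (Eventually.of_forall fun ω => by simpa [Real.norm_eq_abs] using habs t ω w)⟩
  have hEt : ∀ t w, ∫ ω, Phat g P t ω w ∂μ = P w := by
    intro t w
    induction t with
    | zero => simp [Phat]
    | succ t ih =>
      rw [← ih]
      have h1 : ∫ ω, (μ[fun ω => Phat g P (t+1) ω w|(natF g hg) t]) ω ∂μ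
          = ∫ ω, Phat g P (t+1) ω w ∂μ := integral_condExp ((natF g hg).le t)
      rw [← h1]
      exact integral_congr_ae ((hmart w).condExp_ae_eq (Nat.le_succ t))
  have hpm : ∀ᵐ ω ∂μ, ∃ w0, ∀ w, Plim ω w = if w = w0 then 1 else 0 := by
    filter_upwards [hconv, hio] with ω hc hfreq
    set L : W → ℝ := Plim ω with hL
    have hL0 : ∀ w, 0 ≤ L w := fun w =>
      ge_of_tendsto (hc w) (Eventually.of_forall fun t => (phat_inv g P hP0 hP1 t ω).1 w)
    have hLsum : ∑ w, L w = 1 := by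
      have h1 : Tendsto (fun t => ∑ w, Phat g P t ω w) atTop (𝓝 (∑ w, L w)) :=
        tendsto_finset_sum _ fun w _ => hc w
      have h2 : (fun t => ∑ w, Phat g P t ω w) = fun _ => (1:ℝ) :=
        funext fun t => (phat_inv g P hP0 hP1 t ω).2
      rw [h2] at h1
      exact tendsto_nhds_unique h1 tendsto_const_nhds
    have hmul : ∀ w0 w, w ≠ w0 → L w * L w0 = 0 := by
      intro w0 w hww0
      obtain ⟨φ, hφmono, hφ⟩ := extraction_of_frequently_atTop (hfreq w0)
      have h1 : Tendsto (fun n => Phat g P (φ n) ω w) atTop (𝓝 (L w)) :=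
        (hc w).comp hφmono.tendsto_atTop
      have h1' : Tendsto (fun n => Phat g P (φ n) ω w0) atTop (𝓝 (L w0)) :=
        (hc w0).comp hφmono.tendsto_atTop
      have h2 : ∀ n, Phat g P (φ n + 1) ω w
          = Phat g P (φ n) ω w * (1 - Phat g P (φ n) ω w0) := by
        intro n
        show Tg (g (φ n) ω) (Phat g P (φ n) ω) w = _
        rw [hφ n]
        unfold Tg
        have hsum : (∑ w', if (fun w => decide (w = w0)) w' then Phat g P (φ n) ω w' else 0)
            = Phat g P (φ n) ω w0 := by
          simp only [decide_eq_true_eq]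
          rw [Finset.sum_ite_eq' Finset.univ w0 (fun w' => Phat g P (φ n) ω w')]
          simp
        rw [hsum]
        simp [hww0]
      have h3 : Tendsto (fun n => Phat g P (φ n + 1) ω w) atTop (𝓝 (L w)) :=
        (hc w).comp ((tendsto_add_atTop_nat 1).comp hφmono.tendsto_atTop)
      rw [funext h2] at h3
      have h4 : Tendsto (fun n => Phat g P (φ n) ω w * (1 - Phat g P (φ n) ω w0)) atTop
          (𝓝 (L w * (1 - L w0))) := h1.mul (tendsto_const_nhds.sub h1')
      have h5 : L w = L w * (1 - L w0) := tendsto_nhds_unique h3 h4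
      nlinarith [h5]
    obtain ⟨w1, -, hw1⟩ : ∃ w1 ∈ Finset.univ, L w1 ≠ 0 :=
      Finset.exists_ne_zero_of_sum_ne_zero (by rw [hLsum]; norm_num)
    have hzero : ∀ w, w ≠ w1 → L w = 0 := by
      intro w hw
      rcases mul_eq_zero.mp (hmul w1 w hw) with h | h
      · exact h
      · exact absurd h hw1
    have hone : L w1 = 1 := by
      have := hLsum
      rw [Finset.sum_eq_single w1 (fun b _ hb => hzero b hb) (fun h => absurd (Finset.mem_univ w1) h)] at this
      exact this
    refine ⟨w1, fun w => ?_⟩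
    by_cases hw : w = w1
    · subst hw; simp [hone]
    · simp [hw, hzero w hw]
  refine ⟨Plim, hconv, hpm, ?_, ?_⟩
  · -- expectation
    intro w
    have hdct : Tendsto (fun t => ∫ ω, Phat g P t ω w ∂μ) atTop (𝓝 (∫ ω, Plim ω w ∂μ)) := by
      refine tendsto_integral_of_dominated_convergence (fun _ => (1:ℝ))
        (fun t => (hmeas t w).aestronglyMeasurable) (integrable_const 1)
        (fun t => Eventually.of_forall fun ω => by simpa [Real.norm_eq_abs] using habs t ω w) ?_
      filter_upwards [hconv] with ω hω
      exact hω w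
    have h2 : (fun t => ∫ ω, Phat g P t ω w ∂μ) = fun _ => P w := funext fun t => hEt t w
    rw [h2] at hdct
    exact tendsto_nhds_unique hdct tendsto_const_nhds
  · -- entropy
    filter_upwards [hconv, hpm] with ω hc hpm'
    obtain ⟨w1, hw1⟩ := hpm'
    have h1 : Tendsto (fun t => Ent (Phat g P t ω)) atTop (𝓝 (Ent (Plim ω))) := by
      simp only [Ent]
      exact (tendsto_finset_sum _ fun w _ =>
        (Real.continuous_mul_log.tendsto (Plim ω w)).comp (hc w)).neg
    have h2 : Ent (Plim ω) = 0 := by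
      simp only [Ent, neg_eq_zero]
      refine Finset.sum_eq_zero fun w _ => ?_
      rw [hw1 w]
      by_cases hw : w = w1 <;> simp [hw]
    rwa [h2] at h1
end
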